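/- arXiv:2605.21013 — 2 statements merged into one kernel-verified Lean document; each statement's English description precedes it below -/
import Mathlib

section
/- Let m ≥ 1, k = ℓ + m − 1, and A₀, A₁, …, A_m ∈ ℂ^{k×ℓ}. Let (λ*, x*) ∈ ℂ^m × ℂ^ℓ be an eigenpair, i.e., x* ≠ 0 and W(λ*) x* = 0. Suppose λ* is an algebraically simple eigenvalue, in the sense that χ_σ(λ*) = 0 for every subset σ ⊆ {1, …, k} of size ℓ, and the L × m Jacobian matrix whose entries are the partial derivatives ∂χ_σ/∂λ_j evaluated at λ*, with one row per size-ℓ subset σ (L = C(k, ℓ)) and columns j = 1, …, m, has rank m. Then for every choice of m linearly independent vectors y₁, …, y_m ∈ ℂ^k satisfying y_i^H W(λ*) = 0 for i = 1, …, m, the m × m matrix B with entries B_{ij} = y_i^H A_j x* (i, j = 1, …, m) is nonsingular. -/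
open scoped ComplexOrder
open Matrix

noncomputable def enorm2 {n : ℕ} (x : Fin n → ℂ) : ℝ :=
  ‖(WithLp.equiv 2 (Fin n → ℂ)).symm x‖

noncomputable def opNorm2 {k l : ℕ} (M : Matrix (Fin k) (Fin l) ℂ) : ℝ :=
  ‖LinearMap.toContinuousLinearMap (Matrix.toEuclideanLin M)‖

noncomputable def sigmaMin {k l : ℕ} (M : Matrix (Fin k) (Fin l) ℂ) : ℝ :=
  sInf {r : ℝ | ∃ x : Fin l → ℂ, enorm2 x = 1 ∧ r = enorm2 (M.mulVec x)}

noncomputable def pencil {m k l : ℕ} (A : Fin (m + 1) → Matrix (Fin k) (Fin l) ℂ)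
    (lam : Fin m → ℂ) : Matrix (Fin k) (Fin l) ℂ :=
  A 0 + ∑ i : Fin m, lam i • A i.succ

noncomputable def gammaVal {m k l : ℕ} (E : Fin (m + 1) → Matrix (Fin k) (Fin l) ℂ)
    (lam : Fin m → ℂ) : ℝ :=
  opNorm2 (E 0) + ∑ i : Fin m, ‖lam i‖ * opNorm2 (E i.succ)

open MvPolynomial in
/-- The pencil `W(λ)` with the spectral parameters as polynomial variables. -/
noncomputable def pencilPoly {m k l : ℕ} (A : Fin (m + 1) → Matrix (Fin k) (Fin l) ℂ) :
    Matrix (Fin k) (Fin l) (MvPolynomial (Fin m) ℂ) :=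
  Matrix.of fun i j => C (A 0 i j) + ∑ t : Fin m, X t * C (A t.succ i j)

/-- The secular polynomial `χ_σ`: the determinant of the `ℓ × ℓ` submatrix of the
polynomial pencil formed by the rows indexed by a size-`ℓ` subset `σ`. -/
noncomputable def secular {m k l : ℕ} (A : Fin (m + 1) → Matrix (Fin k) (Fin l) ℂ)
    (σ : Finset (Fin k)) (h : σ.card = l) : MvPolynomial (Fin m) ℂ :=
  ((pencilPoly A).submatrix (fun i => ((σ.orderIsoOfFin h i : Fin k))) id).det

/-!
If `B c = 0` for some `c ≠ 0`, put `C = ∑ⱼ cⱼ A_{j+1}` and look at the derivative of every secular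
polynomial in the direction `c`; it is `∑ᵣ det (W_σ with row r replaced by row r of C_σ)`, and we
show that it vanishes, contradicting `rank J = m`.
If `dim ker W ≥ 2`, every such determinant vanishes, since replacing one row keeps a nonzero kernel
vector. Otherwise the left null space of `W` has dimension at most `k - (ℓ - 1) = m`, so it is
spanned by the `yᵢ^H`; these annihilate `C x`, hence `C x = W v` for some `v`. Then
`(W_σ + t C_σ)(x - t v) = O(t²)` with `x ≠ 0`, which forces `t² ∣ det (W_σ + t C_σ)`.
-/

open Module

namespace Derivation

variable {R A M : Type*} [CommSemiring R] [CommRing A] [Algebra R A] [AddCommMonoid M]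
  [Module A M] [Module R M]

theorem sum_apply {ι : Type*} (s : Finset ι) (D : ι → Derivation R A M) (a : A) :
    (∑ i ∈ s, D i) a = ∑ i ∈ s, D i a := by
  simp only [← coeFnAddMonoidHom_apply, map_sum, Finset.sum_apply]

theorem leibniz_prod {ι : Type*} [DecidableEq ι] (D : Derivation R A M) (s : Finset ι)
    (f : ι → A) : D (∏ i ∈ s, f i) = ∑ i ∈ s, (∏ j ∈ s.erase i, f j) • D (f i) := by
  induction s using Finset.induction_on with
  | empty => simp
  | insert a s ha ih =>
    rw [Finset.prod_insert ha, leibniz, ih, Finset.sum_insert ha, Finset.erase_insert ha,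
      Finset.smul_sum, add_comm]
    congr 1
    refine Finset.sum_congr rfl fun i hi => ?_
    rw [Finset.erase_insert_of_ne (ne_of_mem_of_not_mem hi ha).symm,
      Finset.prod_insert fun h => ha (Finset.mem_of_mem_erase h), mul_smul]

theorem map_det {n : Type*} [Fintype n] [DecidableEq n] (D : Derivation R A A)
    (M : Matrix n n A) : D M.det = ∑ i, (M.updateRow i (M.map D i)).det := by
  simp only [det_apply, map_sum, Units.smul_def, map_zsmul, leibniz_prod, smul_eq_mul]
  rw [Finset.sum_comm]
  refine Finset.sum_congr rfl fun σ _ => ?_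
  rw [← Finset.smul_sum]
  congr 1
  symm
  rw [← Equiv.sum_comp σ]
  refine Finset.sum_congr rfl fun c _ => ?_
  rw [← Finset.mul_prod_erase _ _ (Finset.mem_univ c), updateRow_self, map_apply, mul_comm]
  congr 1
  refine Finset.prod_congr rfl fun i hi => ?_
  rw [updateRow_ne (σ.injective.ne (Finset.ne_of_mem_erase hi))]

end Derivation

theorem LinearIndependent.star {ι R M : Type*} [CommSemiring R] [StarRing R] [AddCommMonoid M]
    [StarAddMonoid M] [Module R M] [StarModule R M] {v : ι → M} (hv : LinearIndependent R v) :
    LinearIndependent R (fun i => star (v i)) :=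
  hv.map_of_surjective_injectiveₛ Star.star (starAddEquiv (R := M)).toAddMonoidHom
    star_involutive.surjective star_injective star_smul

namespace Matrix

section Derivative

open Polynomial

variable {R n : Type*} [CommRing R] [Fintype n] [DecidableEq n]

theorem sum_det_updateRow_eq_eval_derivative_det (M N : Matrix n n R) :
    ∑ i, (M.updateRow i (N i)).det =
      (derivative (M.map C + (X : R[X]) • N.map C).det).eval 0 := by
  rw [← derivative'_apply, Derivation.map_det, ← coe_evalRingHom, map_sum]
  refine Finset.sum_congr rfl fun i _ => ?_
  rw [RingHom.map_det, RingHom.mapMatrix_apply, map_updateRow]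
  congr 2 <;> ext <;> simp

theorem X_sq_dvd_det_add_X_smul [IsDomain R] {M N : Matrix n n R} {x v : n → R} (hx : x ≠ 0)
    (hMx : M *ᵥ x = 0) (hNx : N *ᵥ x = M *ᵥ v) :
    (X : R[X]) ^ 2 ∣ (M.map C + (X : R[X]) • N.map C).det := by
  set P := M.map C + (X : R[X]) • N.map C
  set w : n → R[X] := C ∘ x - (X : R[X]) • (C ∘ v)
  set u : n → R[X] := N.map C *ᵥ (C ∘ v)
  have hmap (K : Matrix n n R) (z : n → R) : K.map C *ᵥ (C ∘ z) = C ∘ (K *ᵥ z) :=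
    funext fun i => (RingHom.map_mulVec C K z i).symm
  have hMx' : M.map C *ᵥ (C ∘ x) = 0 := by
    rw [hmap, hMx, Pi.comp_zero, map_zero]
    rfl
  have hNx' : N.map C *ᵥ (C ∘ x) = M.map C *ᵥ (C ∘ v) := by rw [hmap, hmap, hNx]
  have hPw : P *ᵥ w = -(X ^ 2 : R[X]) • u := by
    simp only [P, w, u, add_mulVec, mulVec_sub, mulVec_smul, smul_mulVec, hMx', hNx']
    module
  have hdet : P.det • w = -(X ^ 2 : R[X]) • (P.adjugate *ᵥ u) := by
    rw [← mulVec_smul, ← hPw, mulVec_mulVec, adjugate_mul, smul_mulVec, one_mulVec]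
  obtain ⟨i, hi⟩ := Function.ne_iff.mp hx
  have hX : ¬ X ∣ w i := by simpa [X_dvd_iff, w] using hi
  refine prime_X.pow_dvd_of_dvd_mul_right 2 hX ⟨-(P.adjugate *ᵥ u) i, ?_⟩
  simpa using congrFun hdet i

theorem sum_det_updateRow_eq_zero [IsDomain R] {M N : Matrix n n R} {x v : n → R} (hx : x ≠ 0)
    (hMx : M *ᵥ x = 0) (hNx : N *ᵥ x = M *ᵥ v) : ∑ i, (M.updateRow i (N i)).det = 0 := by
  obtain ⟨q, hq⟩ := X_sq_dvd_det_add_X_smul hx hMx hNx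
  rw [sum_det_updateRow_eq_eval_derivative_det, hq]
  simp [derivative_mul]

end Derivative

section LinearAlgebra

variable {K m n : Type*} [Field K] [Fintype n]

theorem rank_add_finrank_ker_mulVecLin (M : Matrix m n K) :
    M.rank + finrank K (LinearMap.ker M.mulVecLin) = Fintype.card n := by
  rw [rank, LinearMap.finrank_range_add_finrank_ker, finrank_fintype_fun_eq_card]

theorem submatrix_id_mulVec {l : Type*} (M : Matrix m n K) (e : l → m) (v : n → K) :
    M.submatrix e id *ᵥ v = (M *ᵥ v) ∘ e :=
  rfl

theorem det_updateRow_eq_zero_of_two_le_finrank_ker [DecidableEq n] {M : Matrix n n K}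
    (hM : 2 ≤ finrank K (LinearMap.ker M.mulVecLin)) (i : n) (w : n → K) :
    (M.updateRow i w).det = 0 := by
  let f := dotProductBilin K K w ∘ₗ (LinearMap.ker M.mulVecLin).subtype
  obtain ⟨⟨z, hMz⟩, hwz, hz⟩ := Submodule.exists_mem_ne_zero_of_ne_bot
    (LinearMap.ker_ne_bot_of_finrank_lt (f := f) (by simpa [Nat.lt_iff_add_one_le] using hM))
  refine exists_mulVec_eq_zero_iff.mp ⟨z, by simpa using hz, ?_⟩
  funext j
  rcases eq_or_ne j i with rfl | hj
  · simpa [f, mulVec] using hwz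
  · simpa [mulVec, updateRow_ne hj] using congrFun hMz j

theorem rank_lt_card_of_mulVec_eq_zero {M : Matrix m n K} {c : n → K} (hc : c ≠ 0)
    (hMc : M *ᵥ c = 0) : M.rank < Fintype.card n := by
  have := rank_add_finrank_ker_mulVecLin M
  have : 0 < finrank K (LinearMap.ker M.mulVecLin) :=
    finrank_pos_iff_exists_ne_zero.mpr ⟨⟨c, hMc⟩, fun h => hc (congrArg Subtype.val h)⟩
  omega

theorem mem_range_mulVecLin_of_forall_vecMul_eq_zero [Fintype m] {M : Matrix m n K} {b : m → K}
    (h : ∀ u, u ᵥ* M = 0 → u ⬝ᵥ b = 0) : b ∈ LinearMap.range M.mulVecLin := by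
  classical
  rw [← Subspace.forall_mem_dualAnnihilator_apply_eq_zero_iff]
  intro φ hφ
  obtain ⟨u, rfl⟩ := (dotProductEquiv K m).surjective φ
  refine h u (funext fun j => ?_)
  have := (Submodule.mem_dualAnnihilator _).mp hφ _ (LinearMap.mem_range_self _ (Pi.single j 1))
  simpa [vecMul, dotProduct, mul_comm] using this

/-- By counting dimensions, the `u i` span the left null space of `M`. -/
theorem mem_range_mulVecLin_of_linearIndependent [Fintype m] {M : Matrix m n K} {ι : Type*}
    [Fintype ι] {u : ι → m → K} (hu : LinearIndependent K u) (huM : ∀ i, u i ᵥ* M = 0)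
    (hcard : Fintype.card m ≤ M.rank + Fintype.card ι) {b : m → K}
    (hb : ∀ i, u i ⬝ᵥ b = 0) : b ∈ LinearMap.range M.mulVecLin := by
  have hspan : Submodule.span K (Set.range u) = LinearMap.ker Mᵀ.mulVecLin := by
    refine Submodule.eq_of_le_of_finrank_le (Submodule.span_le.mpr ?_) ?_
    · rintro _ ⟨i, rfl⟩
      simpa using huM i
    · have := rank_add_finrank_ker_mulVecLin Mᵀ
      rw [rank_transpose] at this
      rw [finrank_span_eq_card hu]
      omega
  refine mem_range_mulVecLin_of_forall_vecMul_eq_zero fun w hw => ?_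
  have hw' : w ∈ Submodule.span K (Set.range u) := by
    rw [hspan]
    simpa using hw
  have : Submodule.span K (Set.range u) ≤ LinearMap.ker ((dotProductBilin K K).flip b) := by
    rw [Submodule.span_le]
    rintro _ ⟨i, rfl⟩
    simpa using hb i
  simpa using this hw'

end LinearAlgebra

end Matrix

section SecularPolynomials

open MvPolynomial

variable {m k l : ℕ} (A : Fin (m + 1) → Matrix (Fin k) (Fin l) ℂ)

theorem map_eval_pencilPoly (lam : Fin m → ℂ) :
    (pencilPoly A).map (eval lam) = pencil A lam := by
  ext i j
  simp [pencilPoly, pencil, Matrix.sum_apply]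

theorem map_derivation_pencilPoly (c : Fin m → ℂ) :
    (pencilPoly A).map (∑ j, c j • pderiv j : Derivation ℂ (MvPolynomial (Fin m) ℂ) _) =
      (∑ j, c j • A j.succ).map C := by
  ext i t : 1
  simp [pencilPoly, Matrix.sum_apply, Derivation.sum_apply, Pi.single_apply, smul_eq_C_mul]

theorem eval_derivation_secular (lam c : Fin m → ℂ) (σ : Finset (Fin k)) (h : σ.card = l) :
    eval lam ((∑ j, c j • pderiv j : Derivation ℂ (MvPolynomial (Fin m) ℂ) _) (secular A σ h)) =
      ∑ r, (((pencil A lam).submatrix (fun i => (σ.orderIsoOfFin h i : Fin k)) id).updateRow r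
        ((∑ j, c j • A j.succ).submatrix (fun i => (σ.orderIsoOfFin h i : Fin k)) id r)).det := by
  rw [secular, Derivation.map_det, map_sum]
  refine Finset.sum_congr rfl fun r _ => ?_
  rw [RingHom.map_det, RingHom.mapMatrix_apply, map_updateRow]
  congr 2
  · rw [← submatrix_map, map_eval_pencilPoly]
  · ext t
    rw [← submatrix_map, map_derivation_pencilPoly]
    simp

theorem jacobian_mulVec (lam c : Fin m → ℂ) :
    (Matrix.of fun (σ : {s : Finset (Fin k) // s.card = l}) (j : Fin m) =>
        eval lam (pderiv j (secular A σ.1 σ.2))) *ᵥ c =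
      fun σ => eval lam
        ((∑ j, c j • pderiv j : Derivation ℂ (MvPolynomial (Fin m) ℂ) _) (secular A σ.1 σ.2)) := by
  ext σ
  simp [mulVec, dotProduct, Derivation.sum_apply, mul_comm]

end SecularPolynomials

theorem auxiliary_matrix_nonsingular_general {m k l : ℕ} (hk : k = l + m - 1)
    (A : Fin (m + 1) → Matrix (Fin k) (Fin l) ℂ)
    (lam : Fin m → ℂ) (x : Fin l → ℂ) (hx : x ≠ 0)
    (heig : (pencil A lam).mulVec x = 0)
    (hrank : Matrix.rank (Matrix.of fun (σ : {s : Finset (Fin k) // s.card = l}) (j : Fin m) =>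
        MvPolynomial.eval lam (MvPolynomial.pderiv j (secular A σ.1 σ.2))) = m) :
    ∀ y : Fin m → (Fin k → ℂ), LinearIndependent ℂ y →
      (∀ i, Matrix.vecMul (star (y i)) (pencil A lam) = 0) →
      (Matrix.of fun i j : Fin m => star (y i) ⬝ᵥ (A j.succ).mulVec x).det ≠ 0 := by
  intro y hy hyW hB
  obtain ⟨c, hc0, hc⟩ := exists_mulVec_eq_zero_iff.mpr hB
  set W := pencil A lam
  set C := ∑ j, c j • A j.succ
  have hCx (i : Fin m) : star (y i) ⬝ᵥ C *ᵥ x = 0 := by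
    simp only [C, sum_mulVec, smul_mulVec, dotProduct_sum, dotProduct_smul, smul_eq_mul]
    simpa [mulVec, dotProduct, mul_comm] using congrFun hc i
  refine (rank_lt_card_of_mulVec_eq_zero hc0 ?_).ne (by simpa using hrank)
  rw [jacobian_mulVec]
  ext σ
  rw [eval_derivation_secular, Pi.zero_apply]
  by_cases hker : 2 ≤ finrank ℂ (LinearMap.ker W.mulVecLin)
  · refine Finset.sum_eq_zero fun r _ => det_updateRow_eq_zero_of_two_le_finrank_ker
      (hker.trans (Submodule.finrank_mono fun z hz => ?_)) _ _
    rw [LinearMap.mem_ker, mulVecLin_apply] at hz ⊢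
    rw [submatrix_id_mulVec, hz]
    rfl
  · have hcard : Fintype.card (Fin k) ≤ W.rank + Fintype.card (Fin m) := by
      have := rank_add_finrank_ker_mulVecLin W
      simp only [Fintype.card_fin] at this ⊢
      omega
    obtain ⟨v, hv⟩ := mem_range_mulVecLin_of_linearIndependent hy.star hyW hcard hCx
    exact sum_det_updateRow_eq_zero hx (by rw [submatrix_id_mulVec, heig]; rfl)
      (by rw [submatrix_id_mulVec, submatrix_id_mulVec, ← hv]; rfl)

/-- at an algebraically simple eigenvalue the auxiliary matrix `B` is
nonsingular for any basis of the left null space. -/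
theorem auxiliary_matrix_nonsingular {m k l : ℕ} (hm : 1 ≤ m) (hk : k = l + m - 1)
    (A : Fin (m + 1) → Matrix (Fin k) (Fin l) ℂ)
    (lam : Fin m → ℂ) (x : Fin l → ℂ) (hx : x ≠ 0)
    (heig : (pencil A lam).mulVec x = 0)
    (hsec : ∀ (σ : Finset (Fin k)) (h : σ.card = l),
      MvPolynomial.eval lam (secular A σ h) = 0)
    (hrank : Matrix.rank (Matrix.of fun (σ : {s : Finset (Fin k) // s.card = l}) (j : Fin m) =>
        MvPolynomial.eval lam (MvPolynomial.pderiv j (secular A σ.1 σ.2))) = m) :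
    ∀ y : Fin m → (Fin k → ℂ), LinearIndependent ℂ y →
      (∀ i, Matrix.vecMul (star (y i)) (pencil A lam) = 0) →
      (Matrix.of fun i j : Fin m => star (y i) ⬝ᵥ (A j.succ).mulVec x).det ≠ 0 :=
  auxiliary_matrix_nonsingular_general hk A lam x hx heig hrank
end

section
/- Let m ≥ 1, A₀, A₁, …, A_m ∈ ℂ^{k×ℓ}, and E₀, …, E_m ∈ ℂ^{k×ℓ} error matrices. Let λ* ∈ ℂ^m, let x* ∈ ℂ^ℓ with ‖x*‖ = 1, and let y* ∈ ℂ^k with ‖y*‖ = 1. Let ε ≥ 0 and define the perturbations ΔA₀ = −ε ‖E₀‖ y* (x*)^H and ΔA_i = −ε sign(λ*_i) ‖E_i‖ y* (x*)^H for i = 1, …, m. Then ‖ΔA_i‖ ≤ ε ‖E_i‖ for all i = 0, …, m, and for every vector y ∈ ℂ^k one has y^H (ΔA₀ + Σ_{i=1}^m λ*_i ΔA_i) x* = −ε γ(λ*) (y^H y*), where γ(λ*) = ‖E₀‖ + Σ_{i=1}^m |λ*_i| ‖E_i‖. -/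
open scoped ComplexOrder
open Matrix

/-- The sign of a complex number: `sign z = conj z / |z|` for `z ≠ 0`, `sign 0 = 0`. -/
noncomputable def csign (z : ℂ) : ℂ :=
  if z = 0 then 0 else (starRingEnd ℂ) z / ((‖z‖ : ℝ) : ℂ)

/-! Every perturbation is a scalar multiple of the rank-one matrix `y* (x*)ᴴ`, whose spectral norm
is `‖y*‖ ‖x*‖ = 1`, so its norm is the modulus of the scalar, and `|sign z| ≤ 1`. In the
combination `ΔA₀ + Σ λᵢ ΔAᵢ` the identity `λᵢ sign(λᵢ) = |λᵢ|` turns the scalar into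
`-ε γ(λ*)`, and applying `y* (x*)ᴴ` to `x*` returns `y*` because `(x*)ᴴ x* = 1`. -/

section L2OpNorm

open scoped Matrix.Norms.L2Operator

lemma opNorm2_eq_l2_opNorm {k l : ℕ} (M : Matrix (Fin k) (Fin l) ℂ) : opNorm2 M = ‖M‖ := rfl

lemma opNorm2_nonneg {k l : ℕ} (M : Matrix (Fin k) (Fin l) ℂ) : 0 ≤ opNorm2 M := norm_nonneg M

lemma opNorm2_neg_smul {k l : ℕ} (c : ℂ) (M : Matrix (Fin k) (Fin l) ℂ) :
    opNorm2 (-(c • M)) = ‖c‖ * opNorm2 M := by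
  simp only [opNorm2_eq_l2_opNorm, norm_neg, norm_smul]

end L2OpNorm

lemma opNorm2_vecMulVec_star {k l : ℕ} (y : Fin k → ℂ) (x : Fin l → ℂ) :
    opNorm2 (vecMulVec y (star x)) = enorm2 y * enorm2 x := by
  have h := InnerProductSpace.symm_toEuclideanLin_rankOne (𝕜 := ℂ) (WithLp.toLp 2 y)
    (WithLp.toLp 2 x)
  rw [LinearEquiv.symm_apply_eq] at h
  have h_rankOne : LinearMap.toContinuousLinearMap (toEuclideanLin (vecMulVec y (star x))) =
      InnerProductSpace.rankOne ℂ (WithLp.toLp 2 y) (WithLp.toLp 2 x) := by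
    ext1 v
    rw [← h]
    rfl
  rw [opNorm2, h_rankOne, InnerProductSpace.norm_rankOne]
  rfl

lemma star_dotProduct_self {n : ℕ} (x : Fin n → ℂ) : star x ⬝ᵥ x = ((enorm2 x : ℝ) : ℂ) ^ 2 := by
  rw [dotProduct_comm, ← EuclideanSpace.inner_toLp_toLp, inner_self_eq_norm_sq_to_K]
  rfl

lemma dotProduct_vecMulVec_mulVec {α m n : Type*} [CommSemiring α] [Fintype m] [Fintype n]
    (u a : m → α) (b w : n → α) : u ⬝ᵥ vecMulVec a b *ᵥ w = (u ⬝ᵥ a) * (b ⬝ᵥ w) := by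
  rw [vecMulVec_mulVec, op_smul_eq_smul, dotProduct_smul, smul_eq_mul, mul_comm]

lemma mul_csign (z : ℂ) : z * csign z = ((‖z‖ : ℝ) : ℂ) := by
  unfold csign
  split_ifs with hz
  · simp [hz]
  · have : ((‖z‖ : ℝ) : ℂ) ≠ 0 := by exact_mod_cast norm_ne_zero_iff.mpr hz
    rw [← mul_div_assoc, Complex.mul_conj, Complex.normSq_eq_norm_sq]
    field_simp
    push_cast
    ring

lemma norm_csign_le_one (z : ℂ) : ‖csign z‖ ≤ 1 := by
  unfold csign
  split_ifs with hz
  · simp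
  · rw [norm_div, Complex.norm_conj, Complex.norm_real, Real.norm_of_nonneg (norm_nonneg z)]
    exact div_self_le_one _

lemma sum_mul_ofReal_mul_csign_mul {m : ℕ} (ε : ℝ) (lam : Fin m → ℂ) (e : Fin m → ℝ) :
    ∑ i, lam i * ((ε : ℂ) * csign (lam i) * (e i : ℂ)) = ((ε * ∑ i, ‖lam i‖ * e i : ℝ) : ℂ) := by
  push_cast
  rw [Finset.mul_sum]
  refine Finset.sum_congr rfl fun i _ => ?_
  rw [← mul_csign]
  ring

lemma sum_smul_of_eq_neg_smul {R M ι : Type*} [CommRing R] [AddCommGroup M] [Module R M]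
    [Fintype ι] (lam c : ι → R) (Δ : ι → M) (V : M) (hΔ : ∀ i, Δ i = -(c i • V)) :
    ∑ i, lam i • Δ i = -((∑ i, lam i * c i) • V) := by
  simp only [hΔ, smul_neg, smul_smul, Finset.sum_neg_distrib, Finset.sum_smul]

theorem worst_case_perturbations_general {m k l : ℕ}
    (E : Fin (m + 1) → Matrix (Fin k) (Fin l) ℂ)
    (lam : Fin m → ℂ) (x : Fin l → ℂ) (hx : enorm2 x = 1)
    (ys : Fin k → ℂ) (hy : enorm2 ys = 1)
    (ε : ℝ) (hε : 0 ≤ ε)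
    (ΔA : Fin (m + 1) → Matrix (Fin k) (Fin l) ℂ)
    (hΔA0 : ΔA 0 = -(((ε * opNorm2 (E 0) : ℝ) : ℂ) • Matrix.vecMulVec ys (star x)))
    (hΔAi : ∀ i : Fin m, ΔA i.succ
      = -(((ε : ℂ) * csign (lam i) * ((opNorm2 (E i.succ) : ℝ) : ℂ)) •
          Matrix.vecMulVec ys (star x))) :
    (∀ i, opNorm2 (ΔA i) ≤ ε * opNorm2 (E i)) ∧
    (∀ y : Fin k → ℂ,
      star y ⬝ᵥ (ΔA 0 + ∑ i : Fin m, lam i • ΔA i.succ).mulVec x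
        = -(((ε * gammaVal E lam : ℝ) : ℂ) * (star y ⬝ᵥ ys))) := by
  set V := vecMulVec ys (star x)
  have hV : ∀ c : ℂ, opNorm2 (-(c • V)) = ‖c‖ := fun c => by
    rw [opNorm2_neg_smul, opNorm2_vecMulVec_star, hx, hy, mul_one, mul_one]
  refine ⟨fun i => ?_, fun y => ?_⟩
  · induction i using Fin.cases with
    | zero =>
      rw [hΔA0, hV, Complex.norm_real, Real.norm_of_nonneg (mul_nonneg hε (opNorm2_nonneg _))]
    | succ i =>
      rw [hΔAi, hV, norm_mul, norm_mul, Complex.norm_real, Complex.norm_real,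
        Real.norm_of_nonneg hε, Real.norm_of_nonneg (opNorm2_nonneg _)]
      exact mul_le_mul_of_nonneg_right (mul_le_of_le_one_right hε (norm_csign_le_one _))
        (opNorm2_nonneg _)
  · have h_comb : ΔA 0 + ∑ i, lam i • ΔA i.succ = -(((ε * gammaVal E lam : ℝ) : ℂ) • V) := by
      rw [sum_smul_of_eq_neg_smul _ _ _ V hΔAi, sum_mul_ofReal_mul_csign_mul, hΔA0, ← neg_add,
        ← add_smul, gammaVal, mul_add]
      push_cast
      rfl
    rw [h_comb, neg_mulVec, smul_mulVec, dotProduct_neg, dotProduct_smul,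
      dotProduct_vecMulVec_mulVec, star_dotProduct_self, hx]
    simp

/-- the worst-case perturbations attaining the eigenvalue condition
number are feasible and produce the claimed first-order effect. -/
theorem worst_case_perturbations {m k l : ℕ} (hm : 1 ≤ m)
    (A E : Fin (m + 1) → Matrix (Fin k) (Fin l) ℂ)
    (lam : Fin m → ℂ) (x : Fin l → ℂ) (hx : enorm2 x = 1)
    (ys : Fin k → ℂ) (hy : enorm2 ys = 1)
    (ε : ℝ) (hε : 0 ≤ ε)
    (ΔA : Fin (m + 1) → Matrix (Fin k) (Fin l) ℂ)
    (hΔA0 : ΔA 0 = -(((ε * opNorm2 (E 0) : ℝ) : ℂ) • Matrix.vecMulVec ys (star x)))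
    (hΔAi : ∀ i : Fin m, ΔA i.succ
      = -(((ε : ℂ) * csign (lam i) * ((opNorm2 (E i.succ) : ℝ) : ℂ)) •
          Matrix.vecMulVec ys (star x))) :
    (∀ i, opNorm2 (ΔA i) ≤ ε * opNorm2 (E i)) ∧
    (∀ y : Fin k → ℂ,
      star y ⬝ᵥ (ΔA 0 + ∑ i : Fin m, lam i • ΔA i.succ).mulVec x
        = -(((ε * gammaVal E lam : ℝ) : ℂ) * (star y ⬝ᵥ ys))) :=
  worst_case_perturbations_general E lam x hx ys hy ε hε ΔA hΔA0 hΔAi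
end
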